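/- Let C ⊆ ℝᵈ be nonempty closed convex, x ∈ C, and v ∈ ℝᵈ. Then the limit Π_C(x, v) := lim_{h→0⁺} (proj_C(x + h v) - x)/h exists and equals proj_{T_C(x)}(v), the metric projection of v onto the tangent cone of C at x. -/

import Mathlib

/-!
The difference quotient `w_h = (proj_C (x + h v) - x) / h` is the projection of `v` onto
`(C - x) / h`. By convexity these sets increase as `h ↓ 0`, with union the cone `D` of feasible
directions, whose closure is `T_C(x)`. Hence `w_h ∈ T_C(x)`, and for each `u ∈ D` eventually
`‖v - w_h‖ ≤ ‖v - u‖`. Writing `P` for the projection onto `T_C(x)`, the inequality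
`‖q - P v‖² ≤ ‖v - q‖² - ‖v - P v‖²` for `q ∈ T_C(x)` then forces `w_h → P v`.
-/

open scoped Topology

/-- The metric projection onto a set (well-defined for nonempty closed convex sets). -/
noncomputable def metricProj {d : ℕ} (S : Set (EuclideanSpace ℝ (Fin d)))
    (v : EuclideanSpace ℝ (Fin d)) : EuclideanSpace ℝ (Fin d) :=
  Classical.epsilon fun p => p ∈ S ∧ ∀ q ∈ S, ‖v - p‖ ≤ ‖v - q‖

/-- The tangent cone of `C` at `x`: the closure of the cone of feasible directions
`⋃_{h>0} (C - x)/h`. -/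
def tangentCone' {d : ℕ} (C : Set (EuclideanSpace ℝ (Fin d)))
    (x : EuclideanSpace ℝ (Fin d)) : Set (EuclideanSpace ℝ (Fin d)) :=
  closure {v | ∃ h : ℝ, 0 < h ∧ x + h • v ∈ C}

open scoped InnerProductSpace

section MetricProj

variable {d : ℕ} {S : Set (EuclideanSpace ℝ (Fin d))}

lemma metricProj_mem_and_norm_sub_le (hne : S.Nonempty) (hcl : IsClosed S)
    (hconv : Convex ℝ S) (v : EuclideanSpace ℝ (Fin d)) :
    metricProj S v ∈ S ∧ ∀ q ∈ S, ‖v - metricProj S v‖ ≤ ‖v - q‖ := by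
  refine Classical.epsilon_spec (p := fun p => p ∈ S ∧ ∀ q ∈ S, ‖v - p‖ ≤ ‖v - q‖) ?_
  obtain ⟨p, hp, hpi⟩ := exists_norm_eq_iInf_of_complete_convex hne hcl.isComplete hconv v
  refine ⟨p, hp, fun q hq => ?_⟩
  rw [hpi]
  exact ciInf_le ⟨0, fun r ⟨w, hw⟩ => hw ▸ norm_nonneg _⟩ (⟨q, hq⟩ : S)

lemma inner_sub_metricProj_nonpos (hne : S.Nonempty) (hcl : IsClosed S)
    (hconv : Convex ℝ S) (v : EuclideanSpace ℝ (Fin d)) {q : EuclideanSpace ℝ (Fin d)}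
    (hq : q ∈ S) : ⟪v - metricProj S v, q - metricProj S v⟫_ℝ ≤ 0 := by
  obtain ⟨hmem, hmin⟩ := metricProj_mem_and_norm_sub_le hne hcl hconv v
  have : Nonempty S := ⟨⟨_, hmem⟩⟩
  refine (norm_eq_iInf_iff_real_inner_le_zero hconv hmem).mp ?_ q hq
  exact le_antisymm (le_ciInf fun w => hmin w w.2)
    (ciInf_le ⟨0, fun r ⟨w, hw⟩ => hw ▸ norm_nonneg _⟩ (⟨_, hmem⟩ : S))

lemma norm_sub_metricProj_sq_le (hne : S.Nonempty) (hcl : IsClosed S)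
    (hconv : Convex ℝ S) (v : EuclideanSpace ℝ (Fin d)) {q : EuclideanSpace ℝ (Fin d)}
    (hq : q ∈ S) : ‖q - metricProj S v‖ ^ 2 ≤ ‖v - q‖ ^ 2 - ‖v - metricProj S v‖ ^ 2 := by
  have hinner := inner_sub_metricProj_nonpos hne hcl hconv v hq
  have hexpand : ‖v - q‖ ^ 2 = ‖v - metricProj S v‖ ^ 2
      - 2 * ⟪v - metricProj S v, q - metricProj S v⟫_ℝ + ‖q - metricProj S v‖ ^ 2 := by
    rw [← norm_sub_sq_real, sub_sub_sub_cancel_right]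
  linarith

theorem tendsto_metricProj_closure_of_eventually_norm_sub_le {α : Type*} {l : Filter α}
    {D : Set (EuclideanSpace ℝ (Fin d))} (hne : D.Nonempty) (hconv : Convex ℝ D)
    {v : EuclideanSpace ℝ (Fin d)} {f : α → EuclideanSpace ℝ (Fin d)}
    (hf_mem : ∀ᶠ a in l, f a ∈ closure D) (hf_le : ∀ u ∈ D, ∀ᶠ a in l, ‖v - f a‖ ≤ ‖v - u‖) :
    Filter.Tendsto f l (𝓝 (metricProj (closure D) v)) := by
  set w := metricProj (closure D) v
  have hw : w ∈ closure D :=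
    (metricProj_mem_and_norm_sub_le hne.closure isClosed_closure hconv.closure v).1
  rw [Metric.tendsto_nhds]
  intro ε hε
  have hopen : IsOpen {u : EuclideanSpace ℝ (Fin d) | ‖v - u‖ ^ 2 < ‖v - w‖ ^ 2 + ε ^ 2} :=
    isOpen_lt (by fun_prop) continuous_const
  obtain ⟨u, hu_near, huD⟩ :=
    _root_.mem_closure_iff.mp hw _ hopen (lt_add_of_pos_right _ (pow_pos hε 2))
  filter_upwards [hf_mem, hf_le u huD] with a ha_mem ha_le
  have hsq := norm_sub_metricProj_sq_le hne.closure isClosed_closure hconv.closure v ha_mem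
  have : ‖f a - w‖ ^ 2 < ε ^ 2 := by
    change ‖v - u‖ ^ 2 < ‖v - w‖ ^ 2 + ε ^ 2 at hu_near
    nlinarith [norm_nonneg (v - f a)]
  rw [dist_eq_norm]
  exact lt_of_pow_lt_pow_left₀ 2 hε.le this

end MetricProj

section FeasibleDirections

variable {E : Type*} [AddCommGroup E] [Module ℝ E]

def feasibleDirections (C : Set E) (x : E) : Set E :=
  {v | ∃ h : ℝ, 0 < h ∧ x + h • v ∈ C}

lemma Convex.add_smul_mem_of_le {C : Set E} (hconv : Convex ℝ C) {x w : E} (hx : x ∈ C)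
    {h h' : ℝ} (hh' : 0 ≤ h') (hle : h' ≤ h) (hmem : x + h • w ∈ C) : x + h' • w ∈ C := by
  rcases hh'.eq_or_lt with rfl | hh'
  · simpa using hx
  have hh : 0 < h := hh'.trans_le hle
  have := hconv.add_smul_mem hx hmem ⟨div_nonneg hh'.le hh.le, (div_le_one hh).mpr hle⟩
  rwa [smul_smul, div_mul_cancel₀ _ hh.ne'] at this

lemma zero_mem_feasibleDirections {C : Set E} {x : E} (hx : x ∈ C) :
    (0 : E) ∈ feasibleDirections C x :=
  ⟨1, one_pos, by simpa using hx⟩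

lemma Convex.feasibleDirections {C : Set E} (hconv : Convex ℝ C) {x : E} (hx : x ∈ C) :
    Convex ℝ (feasibleDirections C x) := by
  rintro w₁ ⟨h₁, hh₁, hw₁⟩ w₂ ⟨h₂, hh₂, hw₂⟩ a b ha hb hab
  set h := min h₁ h₂
  have hh : 0 < h := lt_min hh₁ hh₂
  refine ⟨h, hh, ?_⟩
  have hcomb : x + h • (a • w₁ + b • w₂) = a • (x + h • w₁) + b • (x + h • w₂) := by
    match_scalars <;> linarith
  rw [hcomb]
  exact hconv (hconv.add_smul_mem_of_le hx hh.le (min_le_left _ _) hw₁)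
    (hconv.add_smul_mem_of_le hx hh.le (min_le_right _ _) hw₂) ha hb hab

end FeasibleDirections

section DifferenceQuotient

variable {d : ℕ} {C : Set (EuclideanSpace ℝ (Fin d))} {x v : EuclideanSpace ℝ (Fin d)} {h : ℝ}

lemma tangentCone'_eq_closure_feasibleDirections :
    tangentCone' C x = closure (feasibleDirections C x) :=
  rfl

lemma smul_inv_metricProj_sub_mem_feasibleDirections (hne : C.Nonempty) (hcl : IsClosed C)
    (hconv : Convex ℝ C) (hh : 0 < h) :
    h⁻¹ • (metricProj C (x + h • v) - x) ∈ feasibleDirections C x := by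
  refine ⟨h, hh, ?_⟩
  rw [smul_smul, mul_inv_cancel₀ hh.ne', one_smul, add_sub_cancel]
  exact (metricProj_mem_and_norm_sub_le hne hcl hconv _).1

lemma norm_sub_smul_inv_metricProj_sub_le (hne : C.Nonempty) (hcl : IsClosed C)
    (hconv : Convex ℝ C) (hh : 0 < h) {u : EuclideanSpace ℝ (Fin d)} (hu : x + h • u ∈ C) :
    ‖v - h⁻¹ • (metricProj C (x + h • v) - x)‖ ≤ ‖v - u‖ := by
  have hmin := (metricProj_mem_and_norm_sub_le hne hcl hconv (x + h • v)).2 _ hu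
  set p := metricProj C (x + h • v)
  have hp : v - h⁻¹ • (p - x) = h⁻¹ • (x + h • v - p) := by
    rw [smul_sub, smul_sub, smul_add, smul_smul, inv_mul_cancel₀ hh.ne', one_smul]; abel
  have hu' : v - u = h⁻¹ • (x + h • v - (x + h • u)) := by
    rw [add_sub_add_left_eq_sub, ← smul_sub, smul_smul, inv_mul_cancel₀ hh.ne', one_smul]
  rw [hp, hu', norm_smul, norm_smul]
  exact mul_le_mul_of_nonneg_left hmin (norm_nonneg _)

end DifferenceQuotient

/-- for a nonempty closed convex `C`, `x ∈ C` and `v`, the limit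
`lim_{h→0⁺} (proj_C(x + h v) - x)/h` exists and equals the projection of `v` onto the
tangent cone of `C` at `x`. -/
theorem stmt19 {d : ℕ} (C : Set (EuclideanSpace ℝ (Fin d)))
    (hne : C.Nonempty) (hcl : IsClosed C) (hconv : Convex ℝ C)
    (x : EuclideanSpace ℝ (Fin d)) (hx : x ∈ C) (v : EuclideanSpace ℝ (Fin d)) :
    Filter.Tendsto (fun h : ℝ => h⁻¹ • (metricProj C (x + h • v) - x))
      (𝓝[>] (0 : ℝ)) (𝓝 (metricProj (tangentCone' C x) v)) := by
  rw [tangentCone'_eq_closure_feasibleDirections]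
  refine tendsto_metricProj_closure_of_eventually_norm_sub_le
    ⟨0, zero_mem_feasibleDirections hx⟩ (hconv.feasibleDirections hx) ?_ ?_
  · filter_upwards [self_mem_nhdsWithin] with h hh
    exact subset_closure (smul_inv_metricProj_sub_mem_feasibleDirections hne hcl hconv hh)
  · rintro u ⟨h₀, hh₀, hu⟩
    filter_upwards [Ioc_mem_nhdsGT hh₀] with h hh
    exact norm_sub_smul_inv_metricProj_sub_le hne hcl hconv hh.1
      (hconv.add_smul_mem_of_le hx hh.1.le hh.2 hu)
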